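/- The relation M₁ < M₂ defined by M₁ ⊆ A_L(M₂) is a strict partial order on any collection of pairwise disjoint separators of an open annulus A; in particular it is antisymmetric and transitive, and any two disjoint separators are comparable. -/

import Mathlib

/- Model of the open annulus A = S¹ × (0,1), with universal cover ℝ × (0,1). -/

noncomputable section
open Set Filter Topology MeasureTheory

/-- The open interval (0,1) as a type. -/
abbrev IooT : Type := ↥(Set.Ioo (0:ℝ) 1)

/-- The open annulus `A = S¹ × (0,1)`. -/
abbrev Ann : Type := AddCircle (1:ℝ) × IooT

/-- The universal cover `Ã = ℝ × (0,1)` of the open annulus. -/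
abbrev Cov : Type := ℝ × IooT

/-- The covering projection `Ã → A`. -/
def proj : Cov → Ann := fun z => ((z.1 : AddCircle (1:ℝ)), z.2)

/-- An arc (curve) in `A` connecting the left end (y → 0) to the right end (y → 1). -/
def ConnectsEnds (γ : ℝ → Ann) : Prop :=
  Continuous γ ∧ Filter.Tendsto (fun t => ((γ t).2 : ℝ)) Filter.atBot (nhds 0) ∧
    Filter.Tendsto (fun t => ((γ t).2 : ℝ)) Filter.atTop (nhds 1)

/-- A subset of the annulus is separating (essential) if every arc connecting
the two ends of `A` meets it. -/
def Separating (M : Set Ann) : Prop := ∀ γ : ℝ → Ann, ConnectsEnds γ → ∃ t, γ t ∈ M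

/-- A separator: a compact, connected, separating subset of the annulus. -/
def IsSeparator (M : Set Ann) : Prop := IsCompact M ∧ IsConnected M ∧ Separating M

/-- A set contains the left end of the annulus. -/
def ContainsLeftEnd (U : Set Ann) : Prop := ∃ ε > (0:ℝ), ∀ p : Ann, ((p.2 : ℝ) < ε) → p ∈ U

/-- A set contains the right end of the annulus. -/
def ContainsRightEnd (U : Set Ann) : Prop := ∃ ε > (0:ℝ), ∀ p : Ann, (1 - ε < (p.2 : ℝ)) → p ∈ U

/-- `U` is a connected component of the complement of `M`. -/
def IsComponentOfCompl (M U : Set Ann) : Prop := ∃ p, p ∉ M ∧ U = connectedComponentIn Mᶜ p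

/-- `U` is the component of `A − M` containing the left end (`A_L(M)`). -/
def IsLeftComponent (M U : Set Ann) : Prop := IsComponentOfCompl M U ∧ ContainsLeftEnd U

/-- `U` is the component of `A − M` containing the right end (`A_R(M)`). -/
def IsRightComponent (M U : Set Ann) : Prop := IsComponentOfCompl M U ∧ ContainsRightEnd U

/-- The ordering on separators: `M₁ < M₂` iff `M₁ ⊆ A_L(M₂)`. -/
def SepLt (M₁ M₂ : Set Ann) : Prop := ∃ U : Set Ann, IsLeftComponent M₂ U ∧ M₁ ⊆ U

/-! A component of `A − M` containing both ends is open and connected, hence path connected, so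
it carries an arc joining the two ends; a separator `M` meets that arc, so `A_L(M)` and `A_R(M)`
are disjoint. Moreover, for a closed connected `M` in the connected, locally connected space `A`,
the complement of a component of `A − M` is connected: it is `M` together with the other
components, and the closure of each of them meets `M`. Hence if `M₁ ⊆ A_L(M₂)`, the connected set
`A − A_L(M₂)` contains `M₂`, misses `M₁` and meets `A_R(M₁)` near the right end, so
`M₂ ⊆ A_R(M₁)`. Asymmetry and transitivity follow from this, and totality from the same argument
applied to the component of `A − M₂` that contains `M₁`. -/

section ComplementComponents

variable {X : Type*} [TopologicalSpace X] [LocallyConnectedSpace X] {M : Set X}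

theorem frontier_connectedComponentIn_compl_subset (hM : IsClosed M) (x : X) :
    frontier (connectedComponentIn Mᶜ x) ⊆ M := by
  rw [hM.isOpen_compl.connectedComponentIn.frontier_eq]
  rintro z ⟨hz, hzC⟩
  by_contra hzM
  obtain ⟨w, hwz, hwx⟩ :=
    mem_closure_iff.1 hz _ hM.isOpen_compl.connectedComponentIn (mem_connectedComponentIn hzM)
  rw [connectedComponentIn_eq hwx, ← connectedComponentIn_eq hwz] at hzC
  exact hzC (mem_connectedComponentIn hzM)

theorem isPreconnected_union_connectedComponentIn_compl [ConnectedSpace X] (hM : IsClosed M)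
    (hMc : IsPreconnected M) (x : X) : IsPreconnected (M ∪ connectedComponentIn Mᶜ x) := by
  set C := connectedComponentIn Mᶜ x
  rcases C.eq_empty_or_nonempty with hC | hCne
  · rwa [hC, union_empty]
  by_cases hCu : C = univ
  · rw [hCu, union_univ]
    exact isPreconnected_univ
  have hfront := frontier_connectedComponentIn_compl_subset hM x
  obtain ⟨z, hz⟩ := nonempty_frontier_iff.2 ⟨hCne, hCu⟩
  have hMC : M ∪ C = M ∪ closure C := by
    rw [closure_eq_self_union_frontier, ← union_assoc, union_right_comm, union_eq_left.2 hfront]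
  rw [hMC]
  exact hMc.union z (hfront hz) (frontier_subset_closure hz)
    isPreconnected_connectedComponentIn.closure

theorem isPreconnected_compl_connectedComponentIn_compl [ConnectedSpace X] (hM : IsClosed M)
    (hMne : M.Nonempty) (hMc : IsPreconnected M) (x : X) :
    IsPreconnected (connectedComponentIn Mᶜ x)ᶜ := by
  obtain ⟨m, hm⟩ := hMne
  have hcover : (connectedComponentIn Mᶜ x)ᶜ =
      ⋃ y : ↥(connectedComponentIn Mᶜ x)ᶜ, M ∪ connectedComponentIn Mᶜ y := by
    ext z
    simp only [mem_iUnion, mem_union, Subtype.exists, mem_compl_iff]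
    constructor
    · intro hz
      exact ⟨z, hz, or_iff_not_imp_left.2 fun hzM => mem_connectedComponentIn hzM⟩
    · rintro ⟨y, hy, hzM | hzy⟩ hzx
      · exact connectedComponentIn_subset _ _ hzx hzM
      · have hyM : y ∈ Mᶜ := connectedComponentIn_nonempty_iff.1 ⟨z, hzy⟩
        rw [connectedComponentIn_eq hzx, ← connectedComponentIn_eq hzy] at hy
        exact hy (mem_connectedComponentIn hyM)
  rw [hcover]
  exact isPreconnected_iUnion ⟨m, mem_iInter.2 fun _ => Or.inl hm⟩
    fun y => isPreconnected_union_connectedComponentIn_compl hM hMc y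

end ComplementComponents

instance : LocallyPathConnectedSpace IooT := isOpen_Ioo.locallyPathConnectedSpace

instance {p : ℝ} : LocallyPathConnectedSpace (AddCircle p) :=
  inferInstanceAs (LocallyPathConnectedSpace (Quotient _))

instance : ConnectedSpace IooT := Subtype.connectedSpace (isConnected_Ioo one_pos)

theorem continuous_height : Continuous fun p : Ann => (p.2 : ℝ) :=
  continuous_subtype_val.comp continuous_snd

theorem isPreconnected_setOf_height_mem {s : Set ℝ} (hs : s.OrdConnected) :
    IsPreconnected {p : Ann | (p.2 : ℝ) ∈ s} := by
  have hprod : {p : Ann | (p.2 : ℝ) ∈ s} = univ ×ˢ (Subtype.val ⁻¹' s) := by ext; simp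
  rw [hprod]
  refine isPreconnected_univ.prod ?_
  rw [← Topology.IsInducing.subtypeVal.isPreconnected_image, Subtype.image_preimage_coe]
  exact (ordConnected_Ioo.inter hs).isPreconnected

def meridian (t : ℝ) : Ann := (0, ⟨Real.sigmoid t, Real.sigmoid_pos t, Real.sigmoid_lt_one t⟩)

theorem continuous_meridian : Continuous meridian :=
  continuous_const.prodMk (continuous_sigmoid.subtype_mk _)

theorem connectsEnds_meridian : ConnectsEnds meridian :=
  ⟨continuous_meridian, Real.tendsto_sigmoid_atBot, Real.tendsto_sigmoid_atTop⟩

theorem ConnectsEnds.congr {γ δ : ℝ → Ann} (hγ : ConnectsEnds γ) (hδ : Continuous δ)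
    (hbot : γ =ᶠ[atBot] δ) (htop : γ =ᶠ[atTop] δ) : ConnectsEnds δ :=
  ⟨hδ, hγ.2.1.congr' (hbot.fun_comp fun p => (p.2 : ℝ)),
    hγ.2.2.congr' (htop.fun_comp fun p => (p.2 : ℝ))⟩

theorem IsSeparator.nonempty {M : Set Ann} (hM : IsSeparator M) : M.Nonempty :=
  let ⟨_, ht⟩ := hM.2.2 _ connectsEnds_meridian
  ⟨_, ht⟩

section Ends

variable {U V : Set Ann}

theorem ContainsLeftEnd.mono (hU : ContainsLeftEnd U) (hUV : U ⊆ V) : ContainsLeftEnd V :=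
  let ⟨ε, hε, hεU⟩ := hU
  ⟨ε, hε, fun p hp => hUV (hεU p hp)⟩

theorem ContainsRightEnd.mono (hU : ContainsRightEnd U) (hUV : U ⊆ V) : ContainsRightEnd V :=
  let ⟨ε, hε, hεU⟩ := hU
  ⟨ε, hε, fun p hp => hUV (hεU p hp)⟩

theorem ContainsLeftEnd.inter (hU : ContainsLeftEnd U) (hV : ContainsLeftEnd V) :
    ContainsLeftEnd (U ∩ V) := by
  obtain ⟨ε, hε, hεU⟩ := hU
  obtain ⟨δ, hδ, hδV⟩ := hV
  exact ⟨min ε δ, lt_min hε hδ, fun p hp =>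
    ⟨hεU p (hp.trans_le (min_le_left ε δ)), hδV p (hp.trans_le (min_le_right ε δ))⟩⟩

theorem ContainsRightEnd.inter (hU : ContainsRightEnd U) (hV : ContainsRightEnd V) :
    ContainsRightEnd (U ∩ V) := by
  obtain ⟨ε, hε, hεU⟩ := hU
  obtain ⟨δ, hδ, hδV⟩ := hV
  refine ⟨min ε δ, lt_min hε hδ, fun p hp => ⟨hεU p ?_, hδV p ?_⟩⟩ <;>
    linarith [min_le_left ε δ, min_le_right ε δ]

theorem ContainsLeftEnd.eventually_meridian_mem (hU : ContainsLeftEnd U) :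
    ∀ᶠ t in atBot, meridian t ∈ U :=
  let ⟨_, hε, hεU⟩ := hU
  (Real.tendsto_sigmoid_atBot.eventually (gt_mem_nhds hε)).mono fun _ ht => hεU _ ht

theorem ContainsRightEnd.eventually_meridian_mem (hU : ContainsRightEnd U) :
    ∀ᶠ t in atTop, meridian t ∈ U :=
  let ⟨_, hε, hεU⟩ := hU
  (Real.tendsto_sigmoid_atTop.eventually (lt_mem_nhds (sub_lt_self 1 hε))).mono fun _ ht => hεU _ ht

theorem ContainsLeftEnd.nonempty (hU : ContainsLeftEnd U) : U.Nonempty :=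
  let ⟨_, ht⟩ := hU.eventually_meridian_mem.exists
  ⟨_, ht⟩

theorem ContainsRightEnd.nonempty (hU : ContainsRightEnd U) : U.Nonempty :=
  let ⟨_, ht⟩ := hU.eventually_meridian_mem.exists
  ⟨_, ht⟩

/-- Follow the meridian up from the left end to height `sigmoid (-T)`, cross `U` along a path to
height `sigmoid T`, and continue up the meridian. -/
theorem IsPathConnected.exists_connectsEnds (hU : IsPathConnected U) (hL : ContainsLeftEnd U)
    (hR : ContainsRightEnd U) : ∃ γ, ConnectsEnds γ ∧ ∀ t, γ t ∈ U := by
  obtain ⟨T, hT, hTL, hTR⟩ := ((eventually_gt_atTop 0).and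
    ((tendsto_neg_atTop_atBot.eventually_forall_le_atBot hL.eventually_meridian_mem).and
      (eventually_forall_ge_atTop.2 hR.eventually_meridian_mem))).exists
  obtain ⟨Q, hQ⟩ := hU.joinedIn _ (hTL _ le_rfl) _ (hTR _ le_rfl)
  set γ : ℝ → Ann := fun t => if |t| ≤ T then Q.extend ((t + T) / (2 * T)) else meridian t
  have hγ : Continuous γ := by
    refine Continuous.if_le (by fun_prop) continuous_meridian continuous_abs continuous_const ?_
    intro t ht
    rcases (abs_eq hT.le).1 ht with rfl | rfl
    · rw [show (t + t) / (2 * t) = 1 by field_simp; ring, Path.extend_one]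
    · rw [show (-T + T) / (2 * T) = 0 by ring_nf, Path.extend_zero]
  have houtside : ∀ t, T < |t| → γ t = meridian t := fun t ht => if_neg ht.not_ge
  refine ⟨γ, connectsEnds_meridian.congr hγ ?_ ?_, fun t => ?_⟩
  · filter_upwards [eventually_lt_atBot (-T)] with t ht
    exact (houtside t (by rw [lt_abs]; right; linarith)).symm
  · filter_upwards [eventually_gt_atTop T] with t ht
    exact (houtside t (ht.trans_le (le_abs_self t))).symm
  · by_cases ht : |t| ≤ T
    · simp only [γ, if_pos ht]
      exact range_subset_iff.1 (Q.extend_range ▸ range_subset_iff.2 hQ) _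
    · rw [houtside t (not_le.1 ht)]
      rcases lt_abs.1 (not_le.1 ht) with ht | ht
      · exact hTR t ht.le
      · exact hTL t (by linarith)

end Ends

section Components

variable {M U V S : Set Ann}

theorem IsComponentOfCompl.subset_compl (hU : IsComponentOfCompl M U) : U ⊆ Mᶜ := by
  obtain ⟨p, -, rfl⟩ := hU
  exact connectedComponentIn_subset _ _

theorem IsComponentOfCompl.isPreconnected (hU : IsComponentOfCompl M U) : IsPreconnected U := by
  obtain ⟨p, -, rfl⟩ := hU
  exact isPreconnected_connectedComponentIn

theorem IsComponentOfCompl.isPathConnected (hM : IsClosed M) (hU : IsComponentOfCompl M U) :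
    IsPathConnected U := by
  obtain ⟨p, hp, rfl⟩ := hU
  exact hM.isOpen_compl.connectedComponentIn.isConnected_iff_isPathConnected.1
    (isConnected_connectedComponentIn_iff.2 hp)

theorem IsComponentOfCompl.subset_of_isPreconnected (hU : IsComponentOfCompl M U)
    (hS : IsPreconnected S) (hSM : S ⊆ Mᶜ) (hSU : (S ∩ U).Nonempty) : S ⊆ U := by
  obtain ⟨p, -, rfl⟩ := hU
  obtain ⟨z, hzS, hzU⟩ := hSU
  rw [connectedComponentIn_eq hzU]
  exact hS.subset_connectedComponentIn hzS hSM

theorem IsComponentOfCompl.isPreconnected_compl (hM : IsSeparator M)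
    (hU : IsComponentOfCompl M U) : IsPreconnected Uᶜ := by
  obtain ⟨p, -, rfl⟩ := hU
  exact isPreconnected_compl_connectedComponentIn_compl hM.1.isClosed hM.nonempty
    hM.2.1.isPreconnected p

theorem IsPreconnected.exists_isLeftComponent (hS : IsPreconnected S) (hSM : S ⊆ Mᶜ)
    (hSL : ContainsLeftEnd S) : ∃ U, IsLeftComponent M U := by
  obtain ⟨q, hq⟩ := hSL.nonempty
  exact ⟨_, ⟨q, hSM hq, rfl⟩, hSL.mono (hS.subset_connectedComponentIn hq hSM)⟩

theorem IsPreconnected.exists_isRightComponent (hS : IsPreconnected S) (hSM : S ⊆ Mᶜ)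
    (hSR : ContainsRightEnd S) : ∃ U, IsRightComponent M U := by
  obtain ⟨q, hq⟩ := hSR.nonempty
  exact ⟨_, ⟨q, hSM hq, rfl⟩, hSR.mono (hS.subset_connectedComponentIn hq hSM)⟩

theorem exists_isLeftComponent (hM : IsCompact M) : ∃ U, IsLeftComponent M U := by
  obtain ⟨a, ha, hMa⟩ : ∃ a > 0, ∀ p ∈ M, a ≤ (p.2 : ℝ) := by
    rcases M.eq_empty_or_nonempty with rfl | hne
    · exact ⟨1, one_pos, by simp⟩
    obtain ⟨p₀, -, hp₀⟩ := hM.exists_isMinOn hne continuous_height.continuousOn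
    exact ⟨p₀.2, p₀.2.2.1, hp₀⟩
  exact (isPreconnected_setOf_height_mem ordConnected_Iio).exists_isLeftComponent
    (fun p hp hpM => (hMa p hpM).not_gt hp) ⟨a, ha, fun _ => id⟩

theorem exists_isRightComponent (hM : IsCompact M) : ∃ U, IsRightComponent M U := by
  obtain ⟨b, hb, hMb⟩ : ∃ b < 1, ∀ p ∈ M, (p.2 : ℝ) ≤ b := by
    rcases M.eq_empty_or_nonempty with rfl | hne
    · exact ⟨0, zero_lt_one, by simp⟩
    obtain ⟨p₀, -, hp₀⟩ := hM.exists_isMaxOn hne continuous_height.continuousOn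
    exact ⟨p₀.2, p₀.2.2.2, hp₀⟩
  exact (isPreconnected_setOf_height_mem ordConnected_Ioi).exists_isRightComponent
    (fun p hp hpM => (hMb p hpM).not_gt hp) ⟨1 - b, by linarith, fun p hp => by
      simp only [mem_ofPred_eq, mem_Ioi]; linarith⟩

theorem IsSeparator.disjoint_leftComponent_rightComponent (hM : IsSeparator M)
    (hU : IsLeftComponent M U) (hV : IsRightComponent M V) : Disjoint U V := by
  refine disjoint_left.2 fun z hzU hzV => ?_
  have hVU : V ⊆ U := hU.1.subset_of_isPreconnected hV.1.isPreconnected hV.1.subset_compl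
    ⟨z, hzV, hzU⟩
  obtain ⟨γ, hγ, hγU⟩ :=
    (hU.1.isPathConnected hM.1.isClosed).exists_connectsEnds hU.2 (hV.2.mono hVU)
  obtain ⟨t, ht⟩ := hM.2.2 γ hγ
  exact hU.1.subset_compl (hγU t) ht

end Components

section Order

variable {M₁ M₂ M₃ V : Set Ann}

theorem SepLt.subset_rightComponent (hM₂ : IsSeparator M₂) (h : SepLt M₁ M₂)
    (hV : IsRightComponent M₁ V) : M₂ ⊆ V := by
  obtain ⟨U, hU, hM₁U⟩ := h
  obtain ⟨R, hR⟩ := exists_isRightComponent hM₂.1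
  have hRU : R ⊆ Uᶜ := (hM₂.disjoint_leftComponent_rightComponent hU hR).subset_compl_left
  have hUV : Uᶜ ⊆ V := hV.1.subset_of_isPreconnected (hU.1.isPreconnected_compl hM₂)
    (compl_subset_compl.2 hM₁U) ((hR.2.inter hV.2).nonempty.mono (inter_subset_inter_left _ hRU))
  exact (subset_compl_comm.1 hU.1.subset_compl).trans hUV

theorem sepLt_irrefl {M : Set Ann} (hM : IsSeparator M) : ¬ SepLt M M := by
  rintro ⟨U, hU, hMU⟩
  obtain ⟨m, hm⟩ := hM.nonempty
  exact hU.1.subset_compl (hMU hm) hm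

theorem sepLt_asymm (hM₁ : IsSeparator M₁) (hM₂ : IsSeparator M₂) (h₁₂ : SepLt M₁ M₂) :
    ¬ SepLt M₂ M₁ := by
  rintro ⟨L, hL, hM₂L⟩
  obtain ⟨R, hR⟩ := exists_isRightComponent hM₁.1
  obtain ⟨m, hm⟩ := hM₂.nonempty
  exact disjoint_left.1 (hM₁.disjoint_leftComponent_rightComponent hL hR) (hM₂L hm)
    (h₁₂.subset_rightComponent hM₂ hR hm)

theorem sepLt_trans (hM₂ : IsSeparator M₂) (hM₃ : IsSeparator M₃) (h₁₂ : SepLt M₁ M₂)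
    (h₂₃ : SepLt M₂ M₃) : SepLt M₁ M₃ := by
  obtain ⟨L₂, hL₂, hM₁L₂⟩ := h₁₂
  obtain ⟨L₃, hL₃⟩ := exists_isLeftComponent hM₃.1
  obtain ⟨R₂, hR₂⟩ := exists_isRightComponent hM₂.1
  have hL₂M₃ : L₂ ⊆ M₃ᶜ := ((hM₂.disjoint_leftComponent_rightComponent hL₂ hR₂).mono_right
    (h₂₃.subset_rightComponent hM₃ hR₂)).subset_compl_right
  exact ⟨L₃, hL₃, hM₁L₂.trans <| hL₃.1.subset_of_isPreconnected hL₂.1.isPreconnected hL₂M₃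
    (hL₂.2.inter hL₃.2).nonempty⟩

/-- `M₁` lies in one component `C` of `A − M₂`. Either `C = A_L(M₂)`, or the connected set
`Cᶜ ⊇ M₂ ∪ A_L(M₂)` misses `M₁` and reaches the left end, hence lies in `A_L(M₁)`. -/
theorem sepLt_or_sepLt (hM₁ : IsSeparator M₁) (hM₂ : IsSeparator M₂) (hdis : Disjoint M₁ M₂) :
    SepLt M₁ M₂ ∨ SepLt M₂ M₁ := by
  obtain ⟨L₁, hL₁⟩ := exists_isLeftComponent hM₁.1
  obtain ⟨L₂, hL₂⟩ := exists_isLeftComponent hM₂.1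
  obtain ⟨m, hm⟩ := hM₁.nonempty
  have hM₁M₂ : M₁ ⊆ M₂ᶜ := hdis.subset_compl_right
  have hC : IsComponentOfCompl M₂ (connectedComponentIn M₂ᶜ m) := ⟨m, hM₁M₂ hm, rfl⟩
  have hM₁C := hM₁.2.1.isPreconnected.subset_connectedComponentIn hm hM₁M₂
  by_cases hCL₂ : (connectedComponentIn M₂ᶜ m ∩ L₂).Nonempty
  · exact .inl ⟨L₂, hL₂, hM₁C.trans <|
      hL₂.1.subset_of_isPreconnected hC.isPreconnected hC.subset_compl hCL₂⟩
  · have hL₂C : L₂ ⊆ (connectedComponentIn M₂ᶜ m)ᶜ := fun z hz hzC => hCL₂ ⟨z, hzC, hz⟩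
    have hCL₁ : (connectedComponentIn M₂ᶜ m)ᶜ ⊆ L₁ :=
      hL₁.1.subset_of_isPreconnected (hC.isPreconnected_compl hM₂) (compl_subset_compl.2 hM₁C)
        ((hL₂.2.inter hL₁.2).nonempty.mono (inter_subset_inter_left _ hL₂C))
    exact .inr ⟨L₁, hL₁, (subset_compl_comm.1 hC.subset_compl).trans hCL₁⟩

end Order

/-- The relation `M₁ < M₂ ⟺ M₁ ⊆ A_L(M₂)` is a strict partial order on
any collection of pairwise disjoint separators of the open annulus: it is irreflexive,
antisymmetric, transitive, and any two disjoint separators are comparable. -/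
theorem sepLt_strict_partial_order :
    (∀ M : Set Ann, IsSeparator M → ¬ SepLt M M) ∧
    (∀ M₁ M₂ : Set Ann, IsSeparator M₁ → IsSeparator M₂ → Disjoint M₁ M₂ →
      ¬ (SepLt M₁ M₂ ∧ SepLt M₂ M₁)) ∧
    (∀ M₁ M₂ M₃ : Set Ann, IsSeparator M₁ → IsSeparator M₂ → IsSeparator M₃ →
      Disjoint M₁ M₂ → Disjoint M₂ M₃ → Disjoint M₁ M₃ →
      SepLt M₁ M₂ → SepLt M₂ M₃ → SepLt M₁ M₃) ∧
    (∀ M₁ M₂ : Set Ann, IsSeparator M₁ → IsSeparator M₂ → Disjoint M₁ M₂ →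
      SepLt M₁ M₂ ∨ SepLt M₂ M₁) :=
  ⟨fun _ hM => sepLt_irrefl hM,
    fun _ _ hM₁ hM₂ _ h => sepLt_asymm hM₁ hM₂ h.1 h.2,
    fun _ _ _ _ hM₂ hM₃ _ _ _ h₁₂ h₂₃ => sepLt_trans hM₂ hM₃ h₁₂ h₂₃,
    fun _ _ hM₁ hM₂ hdis => sepLt_or_sepLt hM₁ hM₂ hdis⟩
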